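/- If v is a complete valuation on the lattice of downsets of a finite poset P with weight function w, then for all x, y ∈ P with v(↓x) < v(↓y) and x not strictly below y in P, we have w(x) < w(y). -/

import Mathlib

/-!
Write `B = ↓y \ {y}`. The downsets of valuation below `v(↓y)` form an initial segment `T`, and
the join-closure of `T` is again initial; it cannot contain `↓y` (a union of downsets contains `y`
only if one of them does, and that one then contains `↓y`), so every join of members of `T` still
has valuation below `v(↓y) = v(B) + w(y)`. Both `↓x` and `B` lie in `T`, and since `x ∉ B`,
modularity gives `v(↓x ∪ B) = v(↓x) + v(B) - v(↓x ∩ B) ≥ v(B) + w(x)`. Hence `w(x) < w(y)`.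
-/

open Finset

variable (P : Type*) [PartialOrder P] [Fintype P] [DecidableEq P]

/-- The lattice of downsets (lower sets) of a finite poset `P`. -/
def DownSet : Type _ := {A : Finset P // IsLowerSet (↑A : Set P)}

variable {P}

instance : Lattice (DownSet P) :=
  Subtype.lattice (fun _ _ hA hB => by simpa [Finset.sup_eq_union] using hA.union hB)
    (fun _ _ hA hB => by simpa [Finset.inf_eq_inter] using hA.inter hB)

instance : OrderBot (DownSet P) :=
  Subtype.orderBot (by simp [Finset.bot_eq_empty, isLowerSet_empty])

noncomputable instance : Fintype (DownSet P) :=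
  Fintype.ofInjective Subtype.val Subtype.val_injective

/-- The valuation associated to a weight function `w`. -/
def vval (w : P → ℕ) (A : DownSet P) : ℕ := ∑ x ∈ A.1, w x

variable [DecidableRel ((· ≤ ·) : P → P → Prop)]

/-- The principal downset of `y`. -/
def pd (y : P) : DownSet P :=
  ⟨univ.filter (· ≤ y), by
    intro a b hba ha
    simp only [coe_filter, Set.mem_setOf_eq, mem_univ, true_and] at *
    exact hba.trans ha⟩

/-- The dual valuation evaluated on the principal upset of `x`. -/
def vup (w : P → ℕ) (x : P) : ℕ := ∑ z ∈ univ.filter (fun z => x ≤ z), w z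

/-- `T` is an initial segment for the valuation `v`. -/
def Initial (v : DownSet P → ℕ) (T : Set (DownSet P)) : Prop :=
  ∃ j, v '' T = {k | k < j}

/-- `T` is a final segment for the valuation `v`. -/
def Final (v : DownSet P → ℕ) (T : Set (DownSet P)) : Prop :=
  ∃ j, v '' T = {k | j ≤ k ∧ k < Fintype.card (DownSet P)}

/-- The set of arbitrary (nonempty) joins of elements of `T`. -/
def joinSet (T : Set (DownSet P)) : Set (DownSet P) :=
  {a | ∃ S : Finset (DownSet P), ↑S ⊆ T ∧ ∃ hS : S.Nonempty, a = S.sup' hS id}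

/-- The set of arbitrary (nonempty) meets of elements of `T`. -/
def meetSet (T : Set (DownSet P)) : Set (DownSet P) :=
  {a | ∃ S : Finset (DownSet P), ↑S ⊆ T ∧ ∃ hS : S.Nonempty, a = S.inf' hS id}

/-- A complete valuation: bijective onto `{0,…,|L|-1}`, join-closures of initial segments
are initial segments, meet-closures of final segments are final segments. -/
def IsCompleteValuation (w : P → ℕ) : Prop :=
  Set.BijOn (vval w) Set.univ {k | k < Fintype.card (DownSet P)} ∧
  (∀ T, Initial (vval w) T → Initial (vval w) (joinSet T)) ∧
  (∀ T, Final (vval w) T → Final (vval w) (meetSet T))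

/-- The complementary order from two linear orders: `x ≤' y` iff `le1 x y` and `le2 y x`. -/
def le'' (le1 le2 : P → P → Prop) (x y : P) : Prop := le1 x y ∧ le2 y x

/-- The number of chains (under the complementary order) with maximum element `y`. -/
noncomputable def chainCount (le1 le2 : P → P → Prop) (y : P) : ℕ :=
  Set.ncard {C : Finset P | y ∈ C ∧ (∀ a ∈ C, le'' le1 le2 a y) ∧
    ∀ a ∈ C, ∀ b ∈ C, le'' le1 le2 a b ∨ le'' le1 le2 b a}

/-- `{le1, le2}` is a realizer of `P`. -/
def IsRealizer (le1 le2 : P → P → Prop) : Prop :=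
  IsLinearOrder P le1 ∧ IsLinearOrder P le2 ∧ ∀ x y : P, x ≤ y ↔ le1 x y ∧ le2 x y

namespace DownSet

omit [Fintype P] [DecidableRel ((· ≤ ·) : P → P → Prop)]

lemma val_sup (A B : DownSet P) : (A ⊔ B).1 = A.1 ∪ B.1 := rfl

lemma val_inf (A B : DownSet P) : (A ⊓ B).1 = A.1 ∩ B.1 := rfl

lemma exists_mem_of_mem_sup' {S : Finset (DownSet P)} (hS : S.Nonempty) {z : P}
    (hz : z ∈ (S.sup' hS id).1) : ∃ A ∈ S, z ∈ A.1 := by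
  induction hS using Finset.Nonempty.cons_induction with
  | singleton A => exact ⟨A, mem_singleton_self A, hz⟩
  | cons A S hA hS ih =>
    rw [sup'_cons hS, id, val_sup, mem_union] at hz
    rcases hz with hzA | hzS
    · exact ⟨A, mem_cons_self A S, hzA⟩
    · obtain ⟨B, hB, hzB⟩ := ih hzS
      exact ⟨B, mem_cons.2 (Or.inr hB), hzB⟩

lemma exists_mem_of_mem_joinSet {T : Set (DownSet P)} {a : DownSet P} (ha : a ∈ joinSet T)
    {z : P} (hz : z ∈ a.1) : ∃ A ∈ T, z ∈ A.1 := by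
  obtain ⟨S, hST, hS, rfl⟩ := ha
  obtain ⟨A, hA, hzA⟩ := exists_mem_of_mem_sup' hS hz
  exact ⟨A, hST hA, hzA⟩

lemma sup_mem_joinSet {T : Set (DownSet P)} {A B : DownSet P} (hA : A ∈ T) (hB : B ∈ T) :
    A ⊔ B ∈ joinSet T := by
  classical
  refine ⟨{A, B}, ?_, insert_nonempty A {B}, ?_⟩
  · simp [Set.insert_subset_iff, hA, hB]
  · rw [sup'_insert (singleton_nonempty B), sup'_singleton, id, id]

end DownSet

section Valuation

open DownSet

omit [Fintype P] [DecidableRel ((· ≤ ·) : P → P → Prop)]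

variable (w : P → ℕ)

omit [DecidableEq P] in
lemma vval_mono {A B : DownSet P} (hAB : A.1 ⊆ B.1) : vval w A ≤ vval w B :=
  sum_le_sum_of_subset hAB

lemma vval_sup_add_vval_inf (A B : DownSet P) :
    vval w (A ⊔ B) + vval w (A ⊓ B) = vval w A + vval w B := by
  simp only [vval, val_sup, val_inf]
  exact sum_union_inter

lemma vval_add_le_of_notMem {A C : DownSet P} (hCA : C.1 ⊆ A.1) {x : P} (hxA : x ∈ A.1)
    (hxC : x ∉ C.1) : vval w C + w x ≤ vval w A := by
  rw [vval, add_comm, ← sum_insert hxC]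
  exact sum_le_sum_of_subset (insert_subset hxA hCA)

end Valuation

omit [DecidableEq P] in
lemma mem_pd {y z : P} : z ∈ (pd y).1 ↔ z ≤ y := by
  simp [pd]

omit [DecidableEq P] in
lemma pd_subset_of_mem {A : DownSet P} {y : P} (hy : y ∈ A.1) : (pd y).1 ⊆ A.1 :=
  fun _ hz => A.2 (mem_pd.1 hz) hy

def strictPd (y : P) : DownSet P :=
  ⟨(pd y).1.erase y, fun a b hba ha => by
    simp only [coe_erase, Set.mem_sdiff, mem_coe, Set.mem_singleton_iff, mem_pd] at ha ⊢
    exact ⟨hba.trans ha.1, fun hay => ha.2 (le_antisymm ha.1 (hay ▸ hba))⟩⟩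

lemma mem_strictPd {y z : P} : z ∈ (strictPd y).1 ↔ z < y := by
  simp only [strictPd, mem_erase, mem_pd, lt_iff_le_and_ne, and_comm]

lemma vval_strictPd_add (w : P → ℕ) (y : P) : vval w (strictPd y) + w y = vval w (pd y) :=
  sum_erase_add _ _ (mem_pd.2 le_rfl)

namespace IsCompleteValuation

open DownSet

variable {w : P → ℕ} (h : IsCompleteValuation w)
include h

section

omit [DecidableRel ((· ≤ ·) : P → P → Prop)]

lemma injective : Function.Injective (vval w) :=
  fun A B hAB => h.1.injOn (Set.mem_univ A) (Set.mem_univ B) hAB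

lemma vval_lt_card (A : DownSet P) : vval w A < Fintype.card (DownSet P) :=
  h.1.mapsTo (Set.mem_univ A)

lemma vval_lt_vval_of_ssubset {A B : DownSet P} (hAB : A.1 ⊂ B.1) : vval w A < vval w B :=
  (vval_mono w hAB.subset).lt_of_ne fun hv => hAB.ne (congrArg Subtype.val (h.injective hv))

lemma initial_setOf_vval_lt {k : ℕ} (hk : k ≤ Fintype.card (DownSet P)) :
    Initial (vval w) {A | vval w A < k} := by
  refine ⟨k, Set.ext fun m => ⟨?_, fun hm => ?_⟩⟩
  · rintro ⟨A, hA, rfl⟩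
    exact hA
  · obtain ⟨A, -, rfl⟩ := h.1.surjOn (lt_of_lt_of_le hm hk)
    exact ⟨A, hm, rfl⟩

end

/-- `↓y` is join-irreducible, and completeness transfers this from the lattice order to the
order of valuations. -/
lemma vval_sup_lt_vval_pd {y : P} {A B : DownSet P} (hA : vval w A < vval w (pd y))
    (hB : vval w B < vval w (pd y)) : vval w (A ⊔ B) < vval w (pd y) := by
  set T : Set (DownSet P) := {C | vval w C < vval w (pd y)}
  obtain ⟨j, hj⟩ := h.2.1 T (h.initial_setOf_vval_lt (h.vval_lt_card (pd y)).le)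
  have hpd_notMem : pd y ∉ joinSet T := fun hpd => by
    obtain ⟨C, hC, hyC⟩ := exists_mem_of_mem_joinSet hpd (mem_pd.2 le_rfl)
    exact (vval_mono w (pd_subset_of_mem hyC)).not_gt hC
  have hj_le : j ≤ vval w (pd y) := by
    by_contra! hlt
    obtain ⟨C, hC, hCv⟩ : vval w (pd y) ∈ vval w '' joinSet T := hj ▸ hlt
    exact hpd_notMem (h.injective hCv ▸ hC)
  have hsup : vval w (A ⊔ B) ∈ vval w '' joinSet T := ⟨_, sup_mem_joinSet hA hB, rfl⟩
  rw [hj] at hsup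
  exact lt_of_lt_of_le hsup hj_le

end IsCompleteValuation

/-- For a complete valuation: if `v(↓x) < v(↓y)` and `x` is not strictly below `y`,
then `w(x) < w(y)`. -/
theorem stmt3 (w : P → ℕ) (h : IsCompleteValuation w) (x y : P)
    (h1 : vval w (pd x) < vval w (pd y)) (h2 : ¬ x < y) : w x < w y := by
  have hB := vval_strictPd_add w y
  have hB_lt : vval w (strictPd y) < vval w (pd y) :=
    h.vval_lt_vval_of_ssubset (erase_ssubset (mem_pd.2 le_rfl))
  have hsup := h.vval_sup_lt_vval_pd h1 hB_lt
  have hmod := vval_sup_add_vval_inf w (pd x) (strictPd y)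
  have hinf : vval w (pd x ⊓ strictPd y) + w x ≤ vval w (pd x) :=
    vval_add_le_of_notMem w inter_subset_left (mem_pd.2 le_rfl)
      fun hx => h2 (mem_strictPd.1 (mem_inter.1 hx).2)
  omega
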